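/- arXiv:1712.06391 — 4 statements merged into one kernel-verified Lean document; each statement's English description precedes it below -/
import Mathlib

section
/- Let (X, 𝒜, μ) be a measure space and let p_d, p_g : X → ℝ be measurable functions with p_d ≥ 0 and p_g ≥ 0. Define D* : X → ℝ by D*(x) = (b·p_d(x) + a·p_g(x))/(p_d(x) + p_g(x)) when p_d(x) + p_g(x) > 0 and D*(x) = 0 otherwise. Then for every measurable function D : X → ℝ, the LSGAN discriminator objective satisfies V(D) ≥ V(D*), where V(D) = (1/2)∫ p_d(x)·(D(x) − b)² dμ(x) + (1/2)∫ p_g(x)·(D(x) − a)² dμ(x), the integrals being Lebesgue integrals of nonnegative functions with values in [0, ∞]. In other words, D* is an optimal discriminator for a fixed generator. -/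
open MeasureTheory ENNReal

/-- The minimiser of `y ↦ p (y - b)² + q (y - a)²`, with the junk value `0` where `p + q ≤ 0`. -/
noncomputable def weightedMean (p q a b : ℝ) : ℝ :=
  if 0 < p + q then (b * p + a * q) / (p + q) else 0

theorem weighted_sq_eq_at_weightedMean_add {p q : ℝ} (h : 0 < p + q) (a b y : ℝ) :
    p * (y - b) ^ 2 + q * (y - a) ^ 2 =
      p * (weightedMean p q a b - b) ^ 2 + q * (weightedMean p q a b - a) ^ 2
        + (p + q) * (y - weightedMean p q a b) ^ 2 := by
  rw [weightedMean, if_pos h]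
  field_simp
  ring

theorem weighted_sq_weightedMean_le {p q : ℝ} (hp : 0 ≤ p) (hq : 0 ≤ q) (a b y : ℝ) :
    p * (weightedMean p q a b - b) ^ 2 + q * (weightedMean p q a b - a) ^ 2 ≤
      p * (y - b) ^ 2 + q * (y - a) ^ 2 := by
  rcases (add_nonneg hp hq).lt_or_eq with hpos | hzero
  · rw [weighted_sq_eq_at_weightedMean_add hpos a b y]
    have := mul_nonneg hpos.le (sq_nonneg (y - weightedMean p q a b))
    linarith
  · obtain ⟨rfl, rfl⟩ : p = 0 ∧ q = 0 := ⟨by linarith, by linarith⟩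
    simp

theorem lintegral_ofReal_add_le_of_le {X : Type*} [MeasurableSpace X] {μ : Measure X}
    {f₁ f₂ g₁ g₂ : X → ℝ} (hf₁ : ∀ x, 0 ≤ f₁ x) (hf₂ : ∀ x, 0 ≤ f₂ x) (hg₁ : Measurable g₁)
    (hle : ∀ x, f₁ x + f₂ x ≤ g₁ x + g₂ x) :
    (∫⁻ x, ENNReal.ofReal (f₁ x) ∂μ) + ∫⁻ x, ENNReal.ofReal (f₂ x) ∂μ ≤
      (∫⁻ x, ENNReal.ofReal (g₁ x) ∂μ) + ∫⁻ x, ENNReal.ofReal (g₂ x) ∂μ :=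
  calc (∫⁻ x, ENNReal.ofReal (f₁ x) ∂μ) + ∫⁻ x, ENNReal.ofReal (f₂ x) ∂μ
      ≤ ∫⁻ x, ENNReal.ofReal (f₁ x) + ENNReal.ofReal (f₂ x) ∂μ := le_lintegral_add _ _
    _ ≤ ∫⁻ x, ENNReal.ofReal (g₁ x) + ENNReal.ofReal (g₂ x) ∂μ := lintegral_mono fun x => by
        rw [← ENNReal.ofReal_add (hf₁ x) (hf₂ x)]
        exact (ENNReal.ofReal_le_ofReal (hle x)).trans ENNReal.ofReal_add_le
    _ = (∫⁻ x, ENNReal.ofReal (g₁ x) ∂μ) + ∫⁻ x, ENNReal.ofReal (g₂ x) ∂μ :=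
        lintegral_add_left hg₁.ennreal_ofReal _

theorem lsgan_optimal_discriminator_general
    {X : Type*} [MeasurableSpace X] (μ : Measure X)
    (pd pg : X → ℝ) (hpd : Measurable pd)
    (hpd0 : ∀ x, 0 ≤ pd x) (hpg0 : ∀ x, 0 ≤ pg x) (a b : ℝ)
    (Dstar : X → ℝ)
    (hDstar : ∀ x, Dstar x =
      if 0 < pd x + pg x then (b * pd x + a * pg x) / (pd x + pg x) else 0)
    (D : X → ℝ) (hD : Measurable D) :
    (1/2) * (∫⁻ x, ENNReal.ofReal (pd x * (D x - b)^2) ∂μ)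
      + (1/2) * (∫⁻ x, ENNReal.ofReal (pg x * (D x - a)^2) ∂μ)
    ≥ (1/2) * (∫⁻ x, ENNReal.ofReal (pd x * (Dstar x - b)^2) ∂μ)
      + (1/2) * (∫⁻ x, ENNReal.ofReal (pg x * (Dstar x - a)^2) ∂μ) := by
  have hDstar_eq : Dstar = fun x => weightedMean (pd x) (pg x) a b := funext hDstar
  rw [ge_iff_le, ← mul_add, ← mul_add]
  gcongr 1 / 2 * ?_
  refine lintegral_ofReal_add_le_of_le (fun x => mul_nonneg (hpd0 x) (sq_nonneg _))
    (fun x => mul_nonneg (hpg0 x) (sq_nonneg _))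
    (hpd.mul ((hD.sub measurable_const).pow_const 2)) fun x => ?_
  rw [hDstar_eq]
  exact weighted_sq_weightedMean_le (hpd0 x) (hpg0 x) a b (D x)

/-- Proposition 1 of the LSGAN paper: for a fixed generator, the discriminator
`D*(x) = (b·p_d(x) + a·p_g(x))/(p_d(x) + p_g(x))` (and `0` where `p_d + p_g` is
not positive) minimizes the least-squares discriminator objective. -/
theorem lsgan_optimal_discriminator
    {X : Type*} [MeasurableSpace X] (μ : Measure X)
    (pd pg : X → ℝ) (hpd : Measurable pd) (hpg : Measurable pg)
    (hpd0 : ∀ x, 0 ≤ pd x) (hpg0 : ∀ x, 0 ≤ pg x) (a b : ℝ)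
    (Dstar : X → ℝ)
    (hDstar : ∀ x, Dstar x =
      if 0 < pd x + pg x then (b * pd x + a * pg x) / (pd x + pg x) else 0)
    (D : X → ℝ) (hD : Measurable D) :
    (1/2) * (∫⁻ x, ENNReal.ofReal (pd x * (D x - b)^2) ∂μ)
      + (1/2) * (∫⁻ x, ENNReal.ofReal (pg x * (D x - a)^2) ∂μ)
    ≥ (1/2) * (∫⁻ x, ENNReal.ofReal (pd x * (Dstar x - b)^2) ∂μ)
      + (1/2) * (∫⁻ x, ENNReal.ofReal (pg x * (Dstar x - a)^2) ∂μ) :=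
  lsgan_optimal_discriminator_general μ pd pg hpd hpd0 hpg0 a b Dstar hDstar D hD
end

section
/- Let (X, 𝒜, μ) be a measure space, let p_d, p_g : X → ℝ be measurable functions with p_d ≥ 0 and p_g ≥ 0, and let D* be defined by D*(x) = (b·p_d(x) + a·p_g(x))/(p_d(x) + p_g(x)) when p_d(x) + p_g(x) > 0 and D*(x) = 0 otherwise. If a measurable function D : X → ℝ satisfies V(D) = V(D*) < ∞, where V(D) = (1/2)∫ p_d(x)·(D(x) − b)² dμ(x) + (1/2)∫ p_g(x)·(D(x) − a)² dμ(x), then D(x) = D*(x) for μ-almost every x in the set {x : p_d(x) + p_g(x) > 0}. -/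
/-! Completing the square, the pointwise loss `p (y - b)² + q (y - a)²` with `p, q ≥ 0` equals
`(p + q) (y - y*)²` plus its value at the minimiser `y*`. Integrating,
`V(D) = ∫ (p_d + p_g) (D - D*)² dμ + V(D*)`, so when `V(D) = V(D*) < ∞` the nonnegative excess
term has integral zero and hence vanishes a.e.; where `p_d + p_g > 0` this forces `D = D*`. -/

open MeasureTheory ENNReal

noncomputable section

def lsLoss (p q a b y : ℝ) : ℝ := p * (y - b) ^ 2 + q * (y - a) ^ 2

def lsOptimum (p q a b : ℝ) : ℝ := if 0 < p + q then (b * p + a * q) / (p + q) else 0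

theorem lsLoss_eq_mul_sq_add_lsLoss_lsOptimum {p q : ℝ} (hp : 0 ≤ p) (hq : 0 ≤ q) (a b y : ℝ) :
    lsLoss p q a b y =
      (p + q) * (y - lsOptimum p q a b) ^ 2 + lsLoss p q a b (lsOptimum p q a b) := by
  unfold lsLoss lsOptimum
  split_ifs with h
  · field_simp
    ring
  · obtain rfl : p = 0 := by linarith
    obtain rfl : q = 0 := by linarith
    simp

theorem lsLoss_nonneg {p q : ℝ} (hp : 0 ≤ p) (hq : 0 ≤ q) (a b y : ℝ) : 0 ≤ lsLoss p q a b y :=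
  add_nonneg (mul_nonneg hp (sq_nonneg _)) (mul_nonneg hq (sq_nonneg _))

theorem ofReal_lsLoss_eq_add {p q : ℝ} (hp : 0 ≤ p) (hq : 0 ≤ q) (a b y : ℝ) :
    ENNReal.ofReal (lsLoss p q a b y) =
      ENNReal.ofReal ((p + q) * (y - lsOptimum p q a b) ^ 2)
        + ENNReal.ofReal (lsLoss p q a b (lsOptimum p q a b)) := by
  rw [lsLoss_eq_mul_sq_add_lsLoss_lsOptimum hp hq,
    ENNReal.ofReal_add (mul_nonneg (add_nonneg hp hq) (sq_nonneg _)) (lsLoss_nonneg hp hq ..)]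

theorem eq_of_mul_sq_sub_nonpos {w y z : ℝ} (hw : 0 < w) (h : w * (y - z) ^ 2 ≤ 0) : y = z := by
  have hsq : (y - z) ^ 2 = 0 := le_antisymm (nonpos_of_mul_nonpos_right h hw) (sq_nonneg _)
  exact sub_eq_zero.mp (pow_eq_zero_iff two_ne_zero |>.mp hsq)

section Measure

variable {X : Type*} [MeasurableSpace X] {μ : Measure X}

theorem measurable_lsOptimum {p q : X → ℝ} (hp : Measurable p) (hq : Measurable q) (a b : ℝ) :
    Measurable fun x => lsOptimum (p x) (q x) a b :=
  Measurable.ite (measurableSet_lt measurable_const (hp.add hq))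
    (((hp.const_mul b).add (hq.const_mul a)).div (hp.add hq)) measurable_const

theorem lintegral_ofReal_add {f g : X → ℝ} (hf : Measurable f) (hf0 : ∀ x, 0 ≤ f x)
    (hg0 : ∀ x, 0 ≤ g x) :
    ∫⁻ x, ENNReal.ofReal (f x + g x) ∂μ =
      ∫⁻ x, ENNReal.ofReal (f x) ∂μ + ∫⁻ x, ENNReal.ofReal (g x) ∂μ := by
  simp only [ENNReal.ofReal_add (hf0 _) (hg0 _)]
  exact lintegral_add_left hf.ennreal_ofReal _

theorem lintegral_ofReal_lsLoss {p q E : X → ℝ} (hp : Measurable p) (hE : Measurable E)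
    (hp0 : ∀ x, 0 ≤ p x) (hq0 : ∀ x, 0 ≤ q x) (a b : ℝ) :
    ∫⁻ x, ENNReal.ofReal (lsLoss (p x) (q x) a b (E x)) ∂μ =
      ∫⁻ x, ENNReal.ofReal (p x * (E x - b) ^ 2) ∂μ
        + ∫⁻ x, ENNReal.ofReal (q x * (E x - a) ^ 2) ∂μ :=
  lintegral_ofReal_add (hp.mul ((hE.sub_const b).pow_const 2))
    (fun x => mul_nonneg (hp0 x) (sq_nonneg _)) (fun x => mul_nonneg (hq0 x) (sq_nonneg _))

theorem ae_eq_zero_of_lintegral_add_eq {f g : X → ℝ≥0∞} (hf : Measurable f)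
    (h : ∫⁻ x, f x + g x ∂μ = ∫⁻ x, g x ∂μ) (hg : ∫⁻ x, g x ∂μ ≠ ∞) : f =ᵐ[μ] 0 := by
  rw [lintegral_add_left hf] at h
  exact (lintegral_eq_zero_iff hf).mp <| (ENNReal.add_left_inj hg).mp (h.trans (zero_add _).symm)

end Measure

end

/-- Uniqueness part of Proposition 1 of the LSGAN paper: if a measurable
discriminator `D` attains the (finite) optimal value of the least-squares
objective, then `D = D*` μ-a.e. on the set where `p_d + p_g > 0`. -/
theorem lsgan_optimal_discriminator_unique
    {X : Type*} [MeasurableSpace X] (μ : Measure X)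
    (pd pg : X → ℝ) (hpd : Measurable pd) (hpg : Measurable pg)
    (hpd0 : ∀ x, 0 ≤ pd x) (hpg0 : ∀ x, 0 ≤ pg x) (a b : ℝ)
    (Dstar : X → ℝ)
    (hDstar : ∀ x, Dstar x =
      if 0 < pd x + pg x then (b * pd x + a * pg x) / (pd x + pg x) else 0)
    (D : X → ℝ) (hD : Measurable D)
    (heq : (1/2) * (∫⁻ x, ENNReal.ofReal (pd x * (D x - b)^2) ∂μ)
        + (1/2) * (∫⁻ x, ENNReal.ofReal (pg x * (D x - a)^2) ∂μ)
      = (1/2) * (∫⁻ x, ENNReal.ofReal (pd x * (Dstar x - b)^2) ∂μ)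
        + (1/2) * (∫⁻ x, ENNReal.ofReal (pg x * (Dstar x - a)^2) ∂μ))
    (hfin : (1/2) * (∫⁻ x, ENNReal.ofReal (pd x * (Dstar x - b)^2) ∂μ)
        + (1/2) * (∫⁻ x, ENNReal.ofReal (pg x * (Dstar x - a)^2) ∂μ) < ⊤) :
    ∀ᵐ x ∂μ, x ∈ {x | 0 < pd x + pg x} → D x = Dstar x := by
  have hDstar_opt : ∀ x, Dstar x = lsOptimum (pd x) (pg x) a b := hDstar
  have hDstar_meas := measurable_lsOptimum hpd hpg a b
  simp only [hDstar_opt, ← mul_add] at heq hfin ⊢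
  rw [← lintegral_ofReal_lsLoss hpd hD hpd0 hpg0,
    ← lintegral_ofReal_lsLoss hpd hDstar_meas hpd0 hpg0,
    ENNReal.mul_right_inj (by norm_num) (by norm_num),
    lintegral_congr fun x => ofReal_lsLoss_eq_add (hpd0 x) (hpg0 x) a b (D x)] at heq
  rw [← lintegral_ofReal_lsLoss hpd hDstar_meas hpd0 hpg0] at hfin
  have hexcess := ae_eq_zero_of_lintegral_add_eq
    ((hpd.add hpg).mul ((hD.sub hDstar_meas).pow_const 2)).ennreal_ofReal heq
    (ENNReal.lt_top_of_mul_ne_top_right hfin.ne (by norm_num)).ne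
  filter_upwards [hexcess] with x hx hpos
  exact eq_of_mul_sq_sub_nonpos hpos (ENNReal.ofReal_eq_zero.mp hx)
end

section
/- Let (X, 𝒜, μ) be a measure space, let p_d, p_g : X → ℝ be measurable with p_d ≥ 0 and p_g ≥ 0, and let real labels a, b, c satisfy b − c = 1 and b − a = 2. With D*(x) = (b·p_d(x) + a·p_g(x))/(p_d(x) + p_g(x)) when p_d(x) + p_g(x) > 0 and D*(x) = 0 otherwise, the LSGAN generator objective at the optimal discriminator satisfies 2C(G) := ∫ p_d(x)·(D*(x) − c)² dμ(x) + ∫ p_g(x)·(D*(x) − c)² dμ(x) = ∫_{\{p_d + p_g > 0\}} (2·p_g(x) − (p_d(x) + p_g(x)))² / (p_d(x) + p_g(x)) dμ(x), i.e., minimizing the LSGAN objective yields minimizing the Pearson χ² divergence between p_d + p_g and 2·p_g. All integrals are Lebesgue integrals of nonnegative functions with values in [0, ∞]. -/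
/-! Where `p + q > 0`, the optimal discriminator turns the generator loss into
`((b - c) p + (a - c) q)² / (p + q)`; the label conditions give `(b - c, a - c) = (1, -1)`,
so this is `(p - q)² / (p + q) = (2 q - (p + q))² / (p + q)`. Where `p + q = 0` both densities
vanish, and so does the integrand. -/

open MeasureTheory ENNReal

noncomputable section

def optimalDiscriminator (a b p q : ℝ) : ℝ :=
  if 0 < p + q then (b * p + a * q) / (p + q) else 0

lemma measurable_optimalDiscriminator {X : Type*} [MeasurableSpace X] {pd pg : X → ℝ}
    (hpd : Measurable pd) (hpg : Measurable pg) (a b : ℝ) :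
    Measurable fun x => optimalDiscriminator a b (pd x) (pg x) :=
  Measurable.ite (measurableSet_lt measurable_const (hpd.add hpg))
    (((hpd.const_mul b).add (hpg.const_mul a)).div (hpd.add hpg)) measurable_const

lemma add_mul_optimalDiscriminator_sub_sq {a b c p q : ℝ} (hpq : 0 < p + q) :
    (p + q) * (optimalDiscriminator a b p q - c) ^ 2
      = ((b - c) * p + (a - c) * q) ^ 2 / (p + q) := by
  rw [optimalDiscriminator, if_pos hpq]
  field_simp
  ring

lemma mul_optimalDiscriminator_sub_sq_add {a b c p q : ℝ} (hp : 0 ≤ p) (hq : 0 ≤ q)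
    (hbc : b - c = 1) (hba : b - a = 2) :
    p * (optimalDiscriminator a b p q - c) ^ 2 + q * (optimalDiscriminator a b p q - c) ^ 2
      = if 0 < p + q then (2 * q - (p + q)) ^ 2 / (p + q) else 0 := by
  split_ifs with hpq
  · have hac : a - c = -1 := by linarith
    rw [← add_mul, add_mul_optimalDiscriminator_sub_sq hpq, hbc, hac]
    ring
  · obtain ⟨rfl, rfl⟩ : p = 0 ∧ q = 0 := ⟨by linarith, by linarith⟩
    simp

lemma lintegral_add_eq_setLIntegral_of_eq_indicator {X : Type*} [MeasurableSpace X]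
    {μ : Measure X} {f g h : X → ℝ≥0∞} {s : Set X} (hf : Measurable f) (hs : MeasurableSet s)
    (hfg : ∀ x, f x + g x = s.indicator h x) :
    ∫⁻ x, f x ∂μ + ∫⁻ x, g x ∂μ = ∫⁻ x in s, h x ∂μ := by
  rw [← lintegral_add_left hf, lintegral_congr hfg, lintegral_indicator hs]

end

/-- Main theorem of the LSGAN paper: if the labels satisfy `b - c = 1` and
`b - a = 2`, then the LSGAN generator objective at the optimal discriminator
equals the Pearson χ² divergence between `p_d + p_g` and `2·p_g`. -/
theorem lsgan_yields_pearson_chi_squared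
    {X : Type*} [MeasurableSpace X] (μ : Measure X)
    (pd pg : X → ℝ) (hpd : Measurable pd) (hpg : Measurable pg)
    (hpd0 : ∀ x, 0 ≤ pd x) (hpg0 : ∀ x, 0 ≤ pg x) (a b c : ℝ)
    (hbc : b - c = 1) (hba : b - a = 2)
    (Dstar : X → ℝ)
    (hDstar : ∀ x, Dstar x =
      if 0 < pd x + pg x then (b * pd x + a * pg x) / (pd x + pg x) else 0) :
    (∫⁻ x, ENNReal.ofReal (pd x * (Dstar x - c)^2) ∂μ)
      + (∫⁻ x, ENNReal.ofReal (pg x * (Dstar x - c)^2) ∂μ)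
    = ∫⁻ x in {x | 0 < pd x + pg x},
        ENNReal.ofReal ((2 * pg x - (pd x + pg x))^2 / (pd x + pg x)) ∂μ := by
  obtain rfl : Dstar = fun x => optimalDiscriminator a b (pd x) (pg x) := funext hDstar
  have hmeas : Measurable fun x => pd x * (optimalDiscriminator a b (pd x) (pg x) - c) ^ 2 :=
    hpd.mul (((measurable_optimalDiscriminator hpd hpg a b).sub_const c).pow_const 2)
  refine lintegral_add_eq_setLIntegral_of_eq_indicator hmeas.ennreal_ofReal
    (measurableSet_lt measurable_const (hpd.add hpg)) fun x => ?_
  rw [← ENNReal.ofReal_add (mul_nonneg (hpd0 x) (sq_nonneg _))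
      (mul_nonneg (hpg0 x) (sq_nonneg _)), mul_optimalDiscriminator_sub_sq_add (hpd0 x) (hpg0 x) hbc hba]
  by_cases hx : 0 < pd x + pg x <;> simp [hx]
end

section
/- Let (X, 𝒜, μ) be a measure space, let p_d, p_g : X → ℝ be measurable with p_d ≥ 0 and p_g ≥ 0, and set a = −1, b = 1, c = 0. With D*(x) = (p_d(x) − p_g(x))/(p_d(x) + p_g(x)) when p_d(x) + p_g(x) > 0 and D*(x) = 0 otherwise, D* is the optimal discriminator for the objective V(D) = (1/2)∫ p_d(x)·(D(x) − 1)² dμ(x) + (1/2)∫ p_g(x)·(D(x) + 1)² dμ(x), i.e., V(D) ≥ V(D*) for every measurable D : X → ℝ, where the integrals are Lebesgue integrals of nonnegative functions with values in [0, ∞]. -/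
/-!
Pointwise, `p (t - b)² + q (t - a)²` is a quadratic in `t` with leading coefficient `p + q`,
minimised at the weighted mean `t = (p b + q a)/(p + q)`; completing the square shows that no
other value does better. With `b = 1`, `a = -1` this is `D*`, so the integrand of `V(D)`
dominates that of `V(D*)` everywhere, and superadditivity of the lower integral together with
additivity on the measurable integrand of `V(D)` transfers this to the integrals.
-/

open MeasureTheory ENNReal

lemma weighted_sq_sum_eq_add_sq (p q a b d : ℝ) (h : p + q ≠ 0) :
    p * (d - b) ^ 2 + q * (d - a) ^ 2 =
      (p + q) * (d - (p * b + q * a) / (p + q)) ^ 2 +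
        (p * ((p * b + q * a) / (p + q) - b) ^ 2 + q * ((p * b + q * a) / (p + q) - a) ^ 2) := by
  field_simp
  ring

lemma weighted_sq_sum_weightedMean_le (p q a b d : ℝ) (h : 0 < p + q) :
    p * ((p * b + q * a) / (p + q) - b) ^ 2 + q * ((p * b + q * a) / (p + q) - a) ^ 2 ≤
      p * (d - b) ^ 2 + q * (d - a) ^ 2 := by
  rw [weighted_sq_sum_eq_add_sq p q a b d h.ne']
  exact le_add_of_nonneg_left (mul_nonneg h.le (sq_nonneg _))

lemma lsgan_pointwise_le (p q d : ℝ) (hp : 0 ≤ p) (hq : 0 ≤ q) :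
    let t := if 0 < p + q then (p - q) / (p + q) else 0
    p * (t - 1) ^ 2 + q * (t + 1) ^ 2 ≤ p * (d - 1) ^ 2 + q * (d + 1) ^ 2 := by
  intro t
  by_cases h : 0 < p + q
  · have hmean : (p - q) / (p + q) = (p * 1 + q * -1) / (p + q) := by ring_nf
    simpa only [t, if_pos h, hmean, sub_neg_eq_add] using
      weighted_sq_sum_weightedMean_le p q (-1) 1 d h
  · obtain rfl : p = 0 := by linarith
    obtain rfl : q = 0 := by linarith
    simp

lemma lintegral_add_le_lintegral_add {X : Type*} [MeasurableSpace X] {μ : Measure X}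
    {f g f' g' : X → ℝ≥0∞} (hf : AEMeasurable f μ) (h : ∀ᵐ x ∂μ, f' x + g' x ≤ f x + g x) :
    ∫⁻ x, f' x ∂μ + ∫⁻ x, g' x ∂μ ≤ ∫⁻ x, f x ∂μ + ∫⁻ x, g x ∂μ :=
  calc ∫⁻ x, f' x ∂μ + ∫⁻ x, g' x ∂μ ≤ ∫⁻ x, f' x + g' x ∂μ := le_lintegral_add _ _
    _ ≤ ∫⁻ x, f x + g x ∂μ := lintegral_mono_ae h
    _ = ∫⁻ x, f x ∂μ + ∫⁻ x, g x ∂μ := lintegral_add_left' hf _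

theorem lsgan_m110_optimal_discriminator_general
    {X : Type*} [MeasurableSpace X] (μ : Measure X)
    (pd pg : X → ℝ) (hpd : Measurable pd)
    (hpd0 : ∀ x, 0 ≤ pd x) (hpg0 : ∀ x, 0 ≤ pg x)
    (Dstar : X → ℝ)
    (hDstar : ∀ x, Dstar x =
      if 0 < pd x + pg x then (pd x - pg x) / (pd x + pg x) else 0)
    (D : X → ℝ) (hD : Measurable D) :
    (1/2) * (∫⁻ x, ENNReal.ofReal (pd x * (D x - 1)^2) ∂μ)
      + (1/2) * (∫⁻ x, ENNReal.ofReal (pg x * (D x + 1)^2) ∂μ)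
    ≥ (1/2) * (∫⁻ x, ENNReal.ofReal (pd x * (Dstar x - 1)^2) ∂μ)
      + (1/2) * (∫⁻ x, ENNReal.ofReal (pg x * (Dstar x + 1)^2) ∂μ) := by
  rw [ge_iff_le, ← mul_add, ← mul_add]
  gcongr 1 / 2 * ?_
  refine lintegral_add_le_lintegral_add (by fun_prop) (.of_forall fun x => ?_)
  have hnonneg (p e : ℝ) (hp : 0 ≤ p) : 0 ≤ p * e ^ 2 := mul_nonneg hp (sq_nonneg e)
  rw [← ofReal_add (hnonneg _ _ (hpd0 x)) (hnonneg _ _ (hpg0 x)),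
    ← ofReal_add (hnonneg _ _ (hpd0 x)) (hnonneg _ _ (hpg0 x)), hDstar x]
  exact ofReal_le_ofReal (lsgan_pointwise_le (pd x) (pg x) (D x) (hpd0 x) (hpg0 x))

/-- The LSGANs_(−110) parameter scheme (Eq. (12) of the LSGAN paper), with
labels `a = −1`, `b = 1`, `c = 0`: the optimal discriminator for the objective
`V(D) = (1/2)∫ p_d·(D − 1)² dμ + (1/2)∫ p_g·(D + 1)² dμ` is
`D*(x) = (p_d(x) − p_g(x))/(p_d(x) + p_g(x))` (and `0` where `p_d + p_g` is not
positive). -/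
theorem lsgan_m110_optimal_discriminator
    {X : Type*} [MeasurableSpace X] (μ : Measure X)
    (pd pg : X → ℝ) (hpd : Measurable pd) (hpg : Measurable pg)
    (hpd0 : ∀ x, 0 ≤ pd x) (hpg0 : ∀ x, 0 ≤ pg x)
    (Dstar : X → ℝ)
    (hDstar : ∀ x, Dstar x =
      if 0 < pd x + pg x then (pd x - pg x) / (pd x + pg x) else 0)
    (D : X → ℝ) (hD : Measurable D) :
    (1/2) * (∫⁻ x, ENNReal.ofReal (pd x * (D x - 1)^2) ∂μ)
      + (1/2) * (∫⁻ x, ENNReal.ofReal (pg x * (D x + 1)^2) ∂μ)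
    ≥ (1/2) * (∫⁻ x, ENNReal.ofReal (pd x * (Dstar x - 1)^2) ∂μ)
      + (1/2) * (∫⁻ x, ENNReal.ofReal (pg x * (Dstar x + 1)^2) ∂μ) :=
  lsgan_m110_optimal_discriminator_general μ pd pg hpd hpd0 hpg0 Dstar hDstar D hD
end
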